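/- Consider the imbalanced ℕ-RPS: the vertex set is {r i : i ≥ 1} ∪ {p i : i ≥ 1}, with beats relation given by: r i beats r j iff i < j; r i beats p j iff i ≠ j; p i beats r j iff j = i; p i beats p j iff j < i. Define v (r i) = v (p i) = 3^(-i) for i ≥ 1. Then v has total mass 1 (∑' over all vertices of v equals 1), and for every vertex o the expected payoff of o is zero: the sum ∑' over {x : o beats x} of v x equals the sum ∑' over {x : x beats o} of v x (both sums converge). Hence the imbalanced ℕ-RPS is playable with totally mixed symmetric Nash equilibrium v. -/

import Mathlib

/-- Vertices of the imbalanced ℕ-RPS: `Sum.inl i` is `r i`, `Sum.inr i` is `p i`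
(indices `i ≥ 1`). -/
abbrev NVertex := ℕ+ ⊕ ℕ+

/-- The beats relation of the imbalanced ℕ-RPS: `r i` beats `r j` iff `i < j`;
`r i` beats `p j` iff `i ≠ j`; `p i` beats `r j` iff `j = i`;
`p i` beats `p j` iff `j < i`. -/
def NBeats : NVertex → NVertex → Prop
  | Sum.inl i, Sum.inl j => i < j
  | Sum.inl i, Sum.inr j => i ≠ j
  | Sum.inr i, Sum.inl j => j = i
  | Sum.inr i, Sum.inr j => j < i

/-- The candidate Nash distribution: `v (r i) = v (p i) = 3⁻ⁱ`. -/
noncomputable def NNash : NVertex → ℝ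
  | Sum.inl i => ((3 : ℝ))⁻¹ ^ (i : ℕ)
  | Sum.inr i => ((3 : ℝ))⁻¹ ^ (i : ℕ)


/-!
Write `q = 3⁻¹`. Each copy of `ℕ+` carries mass `q / (1 - q) = 1/2`, the tail `{j ≥ i}` of a
copy carries `3 qⁱ / 2` and the strict tail `{j > i}` carries `qⁱ / 2`. Every set of vertices
beaten by, or beating, a vertex `o` is a union of two such tails, singletons or their
complements, one in each copy, and in all four cases its mass works out to `(1 - qⁱ) / 2`,
where `qⁱ` is the weight of `o` itself.
-/

open Set

section Geometric

variable {r : ℝ}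

def natEquivPNatIci (i : ℕ+) : ℕ ≃ Ici i where
  toFun n := ⟨⟨i + n, by positivity⟩, PNat.coe_le_coe _ _ |>.mp (Nat.le_add_right _ _)⟩
  invFun j := j - i
  left_inv _ := Nat.add_sub_cancel_left _ _
  right_inv j := Subtype.ext <| PNat.eq <| Nat.add_sub_cancel' <| PNat.coe_le_coe _ _ |>.mpr j.2

theorem hasSum_pow_pnat (hr : |r| < 1) : HasSum (fun j : ℕ+ ↦ r ^ (j : ℕ)) (r / (1 - r)) := by
  have hr₁ : 1 - r ≠ 0 := by linarith [le_abs_self r]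
  have : r / (1 - r) + r ^ 0 = (1 - r)⁻¹ := by field_simp; ring
  rw [hasSum_pnat_iff, this]
  exact hasSum_geometric_of_abs_lt_one hr

theorem hasSum_pow_pnat_Ici (hr : |r| < 1) (i : ℕ+) :
    HasSum (fun j : Ici i ↦ r ^ (j : ℕ)) (r ^ (i : ℕ) / (1 - r)) := by
  rw [← (natEquivPNatIci i).hasSum_iff, div_eq_mul_inv]
  have h := (hasSum_geometric_of_abs_lt_one hr).mul_left (r ^ (i : ℕ))
  simp only [← pow_add] at h
  exact h

theorem hasSum_pow_pnat_Ioi (hr : |r| < 1) (i : ℕ+) :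
    HasSum (fun j : Ioi i ↦ r ^ (j : ℕ)) (r ^ ((i : ℕ) + 1) / (1 - r)) := by
  rw [← Ici_add_one_eq_Ioi]
  exact hasSum_pow_pnat_Ici hr (i + 1)

theorem hasSum_pow_pnat_Iio (hr : |r| < 1) (i : ℕ+) :
    HasSum (fun j : Iio i ↦ r ^ (j : ℕ)) (r / (1 - r) - r ^ (i : ℕ) / (1 - r)) := by
  rw [← compl_Ici]
  exact (hasSum_pow_pnat_Ici hr i).hasSum_iff_compl.mp (hasSum_pow_pnat hr)

theorem hasSum_pow_pnat_compl_singleton (hr : |r| < 1) (i : ℕ+) :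
    HasSum (fun j : ({i}ᶜ : Set ℕ+) ↦ r ^ (j : ℕ)) (r / (1 - r) - r ^ (i : ℕ)) := by
  have hi : HasSum (fun j : ({i} : Set ℕ+) ↦ r ^ (j : ℕ)) (r ^ (i : ℕ)) :=
    hasSum_singleton i (fun j : ℕ+ ↦ r ^ (j : ℕ))
  exact hi.hasSum_iff_compl.mp (hasSum_pow_pnat hr)

end Geometric

theorem hasSum_subtype_sum {α β M : Type*} [AddCommMonoid M] [TopologicalSpace M]
    [ContinuousAdd M] {p : α ⊕ β → Prop} {f : α ⊕ β → M} {s : Set α} {t : Set β} {a b : M}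
    (hs : ∀ i, p (.inl i) ↔ i ∈ s) (ht : ∀ j, p (.inr j) ↔ j ∈ t)
    (ha : HasSum (fun i : s ↦ f (.inl i)) a) (hb : HasSum (fun j : t ↦ f (.inr j)) b) :
    HasSum (fun x : {x // p x} ↦ f x) (a + b) := by
  rw [← (Equiv.subtypeEquivRight hs).hasSum_iff] at ha
  rw [← (Equiv.subtypeEquivRight ht).hasSum_iff] at hb
  exact Equiv.subtypeSum.symm.hasSum_iff.mp (ha.sum hb)

theorem hasSum_NNash : HasSum NNash 1 := by
  have hq : |(3 : ℝ)⁻¹| < 1 := by norm_num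
  convert HasSum.sum (f := NNash) (hasSum_pow_pnat hq) (hasSum_pow_pnat hq) using 1
  norm_num

theorem hasSum_NNash_beatenBy (o : NVertex) :
    HasSum (fun x : {x // NBeats o x} ↦ NNash x) ((1 - NNash o) / 2) := by
  have hq : |(3 : ℝ)⁻¹| < 1 := by norm_num
  rcases o with i | i
  · convert hasSum_subtype_sum (p := NBeats (.inl i)) (f := NNash) (fun _ ↦ Iff.rfl)
      (fun _ ↦ ne_comm) (hasSum_pow_pnat_Ioi hq i) (hasSum_pow_pnat_compl_singleton hq i) using 1
    simp only [NNash]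
    ring
  · convert hasSum_subtype_sum (p := NBeats (.inr i)) (f := NNash) (fun _ ↦ Iff.rfl)
      (fun _ ↦ Iff.rfl) (hasSum_singleton i fun j : ℕ+ ↦ (3 : ℝ)⁻¹ ^ (j : ℕ))
      (hasSum_pow_pnat_Iio hq i) using 1
    simp only [NNash]
    ring

theorem hasSum_NNash_beating (o : NVertex) :
    HasSum (fun x : {x // NBeats x o} ↦ NNash x) ((1 - NNash o) / 2) := by
  have hq : |(3 : ℝ)⁻¹| < 1 := by norm_num
  rcases o with i | i
  · convert hasSum_subtype_sum (p := (NBeats · (.inl i))) (f := NNash) (fun _ ↦ Iff.rfl)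
      (fun _ ↦ eq_comm) (hasSum_pow_pnat_Iio hq i)
      (hasSum_singleton i fun j : ℕ+ ↦ (3 : ℝ)⁻¹ ^ (j : ℕ)) using 1
    simp only [NNash]
    ring
  · convert hasSum_subtype_sum (p := (NBeats · (.inr i))) (f := NNash) (fun _ ↦ Iff.rfl)
      (fun _ ↦ Iff.rfl) (hasSum_pow_pnat_compl_singleton hq i) (hasSum_pow_pnat_Ioi hq i) using 1
    simp only [NNash]
    ring

/-- The distribution `NNash` has total mass one, and at every vertex `o` the expected
payoff is zero: the total mass of the vertices beaten by `o` equals the total mass of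
the vertices beating `o` (both sums converging). Hence the imbalanced ℕ-RPS is
playable with totally mixed symmetric Nash equilibrium `NNash`. -/
theorem imbalanced_N_RPS_playable :
    Summable NNash ∧ (∑' x, NNash x) = 1 ∧
      ∀ o : NVertex,
        Summable (fun x : {x : NVertex // NBeats o x} => NNash x) ∧
        Summable (fun x : {x : NVertex // NBeats x o} => NNash x) ∧
        (∑' x : {x : NVertex // NBeats o x}, NNash x)
          = ∑' x : {x : NVertex // NBeats x o}, NNash x :=
  ⟨hasSum_NNash.summable, hasSum_NNash.tsum_eq, fun o ↦
    ⟨(hasSum_NNash_beatenBy o).summable, (hasSum_NNash_beating o).summable,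
      (hasSum_NNash_beatenBy o).tsum_eq.trans (hasSum_NNash_beating o).tsum_eq.symm⟩⟩
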